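/- Let A = {a_1,...,a_n} ⊂ ℕ^d and C = f_A((0,1)^d) the open toric cube, with dim(C) = k. Then there exists a subset J ⊆ {1,...,n} with |J| = k such that the orthogonal projection of C to the coordinate subspace spanned by the coordinates in J is injective on C and has open image; i.e., C is the graph of a continuous map defined on an open subset of ℝ^k. -/

import Mathlib

/-!
Taking logarithms coordinatewise, `C` is `exp` of the image of the negative orthant under the
exponent matrix `A`. Choose rows `J` of `A` forming a basis of its row space, so `A = c * A_J`.
The projection of `C` to the `J`-coordinates is then `exp` of the image of the negative orthant
under the surjective map `A_J`, hence open, and on it `y ↦ exp (c (log y))` inverts the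
projection. Both maps are `C¹`, so neither increases Hausdorff dimension, and `dim C` equals
that of an open subset of `ℝ^J`, i.e. `|J|`.
-/

open MeasureTheory

/-- The monomial map `f_A`. -/
def monomialMap {d n : ℕ} (a : Fin n → Fin d → ℕ) (t : Fin d → ℝ) : Fin n → ℝ :=
  fun i => ∏ j, t j ^ a i j

/-- The open unit cube `(0,1)^d`. -/
def openUnitCube (d : ℕ) : Set (Fin d → ℝ) := Set.pi Set.univ fun _ => Set.Ioo (0 : ℝ) 1

/-- Projection to the coordinates in `J`. -/
def projTo {n : ℕ} (J : Finset (Fin n)) (x : Fin n → ℝ) : J → ℝ := fun j => x j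

open Matrix Set

theorem Matrix.mulVec_surjective_of_linearIndependent_row {m n K : Type*} [Fintype m]
    [Fintype n] [Field K] {M : Matrix m n K} (h : LinearIndependent K M.row) :
    Function.Surjective M.mulVec := by
  have hrange : LinearMap.range M.mulVecLin = ⊤ :=
    Submodule.eq_top_of_finrank_eq <| by
      rw [Module.finrank_fintype_fun_eq_card]
      exact h.rank_matrix
  exact LinearMap.range_eq_top.1 hrange

theorem Matrix.exists_linearIndependent_row_mul_submatrix_eq {m n K : Type*} [Finite m] [Fintype n]
    [Field K] (A : Matrix m n K) :
    ∃ (J : Finset m) (c : Matrix m J K),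
      LinearIndependent K (A.submatrix ((↑) : J → m) id).row ∧
        c * A.submatrix ((↑) : J → m) id = A := by
  obtain ⟨b, -, -, hspan, hind⟩ :=
    exists_linearIndepOn_extension (linearIndepOn_empty K A.row) (empty_subset univ)
  obtain ⟨J, rfl⟩ := (toFinite b).exists_finset_coe
  have hrow (i : m) : A i ∈ Submodule.span K (A.row '' J) := by
    simpa [row] using hspan ⟨i, trivial, rfl⟩
  choose c hc using fun i => (Submodule.mem_span_image_finset_iff_exists_fun K).1 (hrow i)
  refine ⟨J, of c, hind, Matrix.ext fun i k => ?_⟩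
  rw [Matrix.mul_apply, ← hc i]
  simp [Finset.sum_apply, row, mul_comm]

theorem openUnitCube_eq_image_exp (d : ℕ) :
    openUnitCube d = Pi.map (fun _ => Real.exp) '' univ.pi fun _ => Iio 0 := by
  rw [piMap_image_univ_pi]
  simp [openUnitCube, Real.image_exp_Iio]

theorem dimH_image_eq_of_leftInvOn {E F : Type*} [NormedAddCommGroup E] [NormedSpace ℝ E]
    [FiniteDimensional ℝ E] [NormedAddCommGroup F] [NormedSpace ℝ F] [FiniteDimensional ℝ F]
    {f : E → F} {g : F → E} {s : Set E} {U : Set F} (hf : ContDiff ℝ 1 f)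
    (hg : ContDiffOn ℝ 1 g U) (hU : Convex ℝ U) (hsU : f '' s ⊆ U) (hgf : LeftInvOn g f s) :
    dimH (f '' s) = dimH s := by
  refine le_antisymm (hf.contDiffOn.dimH_image_le convex_univ (subset_univ s)) ?_
  calc dimH s = dimH (g '' (f '' s)) := by rw [hgf.image_image]
    _ ≤ dimH (f '' s) := hg.dimH_image_le hU hsU

section RealMonomialMap

variable {ι κ : Type*} [Fintype κ]

/-- The real-exponent monomial map `y ↦ (∏ⱼ y j ^ c i j)ᵢ` on the positive orthant. -/
noncomputable def realMonomialMap (c : Matrix ι κ ℝ) (y : κ → ℝ) : ι → ℝ :=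
  Pi.map (fun _ => Real.exp) (c *ᵥ Pi.map (fun _ => Real.log) y)

theorem contDiffOn_realMonomialMap [Fintype ι] (c : Matrix ι κ ℝ) :
    ContDiffOn ℝ 1 (realMonomialMap c) (univ.pi fun _ => Ioi 0) := by
  have hlog : ContDiffOn ℝ 1 (Pi.map fun _ => Real.log) (univ.pi fun _ : κ => Ioi 0) :=
    contDiffOn_pi.2 fun j => (Real.contDiffOn_log.comp (contDiff_apply ℝ ℝ j).contDiffOn
      fun y hy => (hy j trivial).ne')
  exact (contDiff_pi.2 fun i => Real.contDiff_exp.comp (contDiff_apply ℝ ℝ i)).comp_contDiffOn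
    (c.mulVecLin.toContinuousLinearMap.contDiff.comp_contDiffOn hlog)

theorem realMonomialMap_piMap_exp (c : Matrix ι κ ℝ) (u : κ → ℝ) :
    realMonomialMap c (Pi.map (fun _ => Real.exp) u) =
      Pi.map (fun _ => Real.exp) (c *ᵥ u) := by
  have hlog : Pi.map (fun _ => Real.log) (Pi.map (fun _ => Real.exp) u) = u :=
    funext fun j => Real.log_exp (u j)
  rw [realMonomialMap, hlog]

end RealMonomialMap

theorem contDiff_projTo {n : ℕ} (J : Finset (Fin n)) : ContDiff ℝ 1 (projTo J) :=
  contDiff_pi.2 fun j => contDiff_apply ℝ ℝ (j : Fin n)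

section ToricCube

variable {d n : ℕ} (a : Fin n → Fin d → ℕ)

def exponentMatrix : Matrix (Fin n) (Fin d) ℝ := of fun i j => a i j

theorem monomialMap_piMap_exp (s : Fin d → ℝ) :
    monomialMap a (Pi.map (fun _ => Real.exp) s) =
      Pi.map (fun _ => Real.exp) (exponentMatrix a *ᵥ s) := by
  ext i
  simp [monomialMap, exponentMatrix, mulVec, dotProduct, Real.exp_sum, ← Real.exp_nat_mul]

theorem projTo_piMap_exp_mulVec (J : Finset (Fin n)) (A : Matrix (Fin n) (Fin d) ℝ)
    (s : Fin d → ℝ) :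
    projTo J (Pi.map (fun _ => Real.exp) (A *ᵥ s)) =
      Pi.map (fun _ => Real.exp) (A.submatrix ((↑) : J → Fin n) id *ᵥ s) :=
  rfl

theorem projTo_image_monomialMap_openUnitCube (J : Finset (Fin n)) :
    projTo J '' (monomialMap a '' openUnitCube d) =
      Pi.map (fun _ => Real.exp) ''
        ((exponentMatrix a).submatrix ((↑) : J → Fin n) id *ᵥ ·) ''
          univ.pi fun _ => Iio 0 := by
  simp only [openUnitCube_eq_image_exp, image_image, monomialMap_piMap_exp,
    projTo_piMap_exp_mulVec]

theorem isOpen_projTo_image_monomialMap_openUnitCube {J : Finset (Fin n)}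
    (hJ : LinearIndependent ℝ ((exponentMatrix a).submatrix ((↑) : J → Fin n) id).row) :
    IsOpen (projTo J '' (monomialMap a '' openUnitCube d)) := by
  rw [projTo_image_monomialMap_openUnitCube]
  have hexp : IsOpenMap (Pi.map fun (_ : J) => Real.exp) :=
    .piMap (fun _ => Real.isOpenEmbedding_exp.isOpenMap) (by simp)
  have hmulVec := LinearMap.isOpenMap_of_finiteDimensional
    ((exponentMatrix a).submatrix ((↑) : J → Fin n) id).mulVecLin
    (mulVec_surjective_of_linearIndependent_row hJ)
  exact hexp _ (hmulVec _ (isOpen_set_pi finite_univ fun _ _ => isOpen_Iio))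

theorem projTo_image_monomialMap_openUnitCube_subset_pi_Ioi (J : Finset (Fin n)) :
    projTo J '' (monomialMap a '' openUnitCube d) ⊆ univ.pi fun _ => Ioi 0 := by
  rw [projTo_image_monomialMap_openUnitCube]
  rintro _ ⟨u, -, rfl⟩ j -
  exact Real.exp_pos (u j)

theorem leftInvOn_realMonomialMap_projTo {J : Finset (Fin n)} {c : Matrix (Fin n) J ℝ}
    (hc : c * (exponentMatrix a).submatrix ((↑) : J → Fin n) id = exponentMatrix a) :
    LeftInvOn (realMonomialMap c) (projTo J) (monomialMap a '' openUnitCube d) := by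
  rw [openUnitCube_eq_image_exp, image_image]
  rintro _ ⟨s, -, rfl⟩
  dsimp only
  rw [monomialMap_piMap_exp, projTo_piMap_exp_mulVec, realMonomialMap_piMap_exp, mulVec_mulVec,
    hc]

end ToricCube

/-- If the open toric cube `C` has dimension `k`, then there is a set `J` of `k`
coordinates such that the projection of `C` to the `J`-coordinates is injective with open
image, and `C` is the graph of a continuous map over this image: `C` is the graph of a
continuous map defined on an open subset of `ℝ^k`. -/
theorem openToricCube_is_graph {d n k : ℕ} (a : Fin n → Fin d → ℕ)
    (hdim : dimH (monomialMap a '' openUnitCube d) = k) :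
    ∃ J : Finset (Fin n), J.card = k ∧
      Set.InjOn (projTo J) (monomialMap a '' openUnitCube d) ∧
      IsOpen (projTo J '' (monomialMap a '' openUnitCube d)) ∧
      ∃ g : (J → ℝ) → (Fin n → ℝ),
        ContinuousOn g (projTo J '' (monomialMap a '' openUnitCube d)) ∧
        ∀ x ∈ monomialMap a '' openUnitCube d, g (projTo J x) = x := by
  obtain ⟨J, c, hJ, hc⟩ := exists_linearIndependent_row_mul_submatrix_eq (exponentMatrix a)
  have hgraph := leftInvOn_realMonomialMap_projTo a hc
  have hopen := isOpen_projTo_image_monomialMap_openUnitCube a hJ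
  have hpos := projTo_image_monomialMap_openUnitCube_subset_pi_Ioi a J
  have hne : (projTo J '' (monomialMap a '' openUnitCube d)).Nonempty :=
    ((univ_pi_nonempty_iff.2 fun _ => nonempty_Ioo.2 zero_lt_one).image _).image _
  have hdimC : dimH (monomialMap a '' openUnitCube d) = J.card := by
    rw [← dimH_image_eq_of_leftInvOn (contDiff_projTo J) (contDiffOn_realMonomialMap c)
      (convex_pi fun _ _ => convex_Ioi 0) hpos hgraph,
      Real.dimH_of_nonempty_interior (by rwa [hopen.interior_eq])]
    simp
  refine ⟨J, by exact_mod_cast hdimC.symm.trans hdim, hgraph.injOn, hopen, realMonomialMap c,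
    (contDiffOn_realMonomialMap c).continuousOn.mono hpos, hgraph⟩
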